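/- Let ω₁, ω₂ ∈ ℂ with Im(ω₁/ω₂) > 0, Λ = {m·ω₁ + n·ω₂ : m, n ∈ ℤ}, and R = {r ∈ ℂ : r·Λ ⊆ Λ}. The map Φ : R × (ℂ/Λ) → (ℂ/Λ → ℂ/Λ) sending (r, [a]) to the induced map f̄_{r,a} : [z] ↦ [r·z + a] is well defined and injective, its image is exactly the set T of all maps of the form f̄_{a,b} with a·Λ ⊆ Λ, and Φ((r,A)·(s,B)) = Φ(r,A) ∘ Φ(s,B), where (r,[a])·(s,[b]) = (r·s, [a + r·b]). Hence the truss of endomorphisms of ℂ/Λ is isomorphic to the crossed-product truss R × (ℂ/Λ). -/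

import Mathlib

/-- The lattice `Λ(ω₁, ω₂) = {m·ω₁ + n·ω₂ : m, n ∈ ℤ}` as an additive subgroup of `ℂ`. -/
noncomputable def lattice (ω₁ ω₂ : ℂ) : AddSubgroup ℂ where
  carrier := {z : ℂ | ∃ m n : ℤ, z = m * ω₁ + n * ω₂}
  zero_mem' := ⟨0, 0, by simp⟩
  add_mem' := by
    rintro x y ⟨m, n, rfl⟩ ⟨m', n', rfl⟩
    exact ⟨m + m', n + n', by push_cast; ring⟩
  neg_mem' := by
    rintro x ⟨m, n, rfl⟩
    exact ⟨-m, -n, by push_cast; ring⟩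

/-- For `r ∈ ℂ` with `r·Λ ⊆ Λ`, the map `r̄ : ℂ/Λ → ℂ/Λ`, `[a] ↦ [r·a]`, induced by
multiplication by `r`. -/
noncomputable def rbar (ω₁ ω₂ r : ℂ)
    (hr : ∀ α ∈ lattice ω₁ ω₂, r * α ∈ lattice ω₁ ω₂) :
    ℂ ⧸ lattice ω₁ ω₂ → ℂ ⧸ lattice ω₁ ω₂ :=
  Quotient.map' (fun z => r * z) (fun x y hxy => by
    rw [QuotientAddGroup.leftRel_apply] at hxy ⊢
    have h : -(r * x) + r * y = r * (-x + y) := by ring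
    rw [h]
    exact hr _ hxy)

/-- The set `R = {r : r·Λ ⊆ Λ}` is closed under `r - s + t`. -/
theorem sub_add_mem_R {ω₁ ω₂ r s t : ℂ}
    (hr : ∀ α ∈ lattice ω₁ ω₂, r * α ∈ lattice ω₁ ω₂)
    (hs : ∀ α ∈ lattice ω₁ ω₂, s * α ∈ lattice ω₁ ω₂)
    (ht : ∀ α ∈ lattice ω₁ ω₂, t * α ∈ lattice ω₁ ω₂) :
    ∀ α ∈ lattice ω₁ ω₂, (r - s + t) * α ∈ lattice ω₁ ω₂ := fun α hα => by
  have h : (r - s + t) * α = r * α - s * α + t * α := by ring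
  rw [h]
  exact add_mem (sub_mem (hr α hα) (hs α hα)) (ht α hα)

/-- The set `R = {r : r·Λ ⊆ Λ}` is closed under multiplication. -/
theorem mul_mem_R {ω₁ ω₂ r s : ℂ}
    (hr : ∀ α ∈ lattice ω₁ ω₂, r * α ∈ lattice ω₁ ω₂)
    (hs : ∀ α ∈ lattice ω₁ ω₂, s * α ∈ lattice ω₁ ω₂) :
    ∀ α ∈ lattice ω₁ ω₂, (r * s) * α ∈ lattice ω₁ ω₂ := fun α hα => by
  rw [mul_assoc]; exact hr _ (hs _ hα)

/-- The multiplier ring `R = {r ∈ ℂ : r·Λ ⊆ Λ}` as a subtype. -/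
def Rmul (ω₁ ω₂ : ℂ) : Type :=
  {r : ℂ // ∀ α ∈ lattice ω₁ ω₂, r * α ∈ lattice ω₁ ω₂}

/-- The map `Φ : R × (ℂ/Λ) → (ℂ/Λ → ℂ/Λ)` sending `(r, [a])` to `f̄_{r,a} : [z] ↦ [r·z + a]`,
i.e. `Φ (r, A) = (X ↦ r̄ X + A)`. -/
noncomputable def Phi (ω₁ ω₂ : ℂ) (x : Rmul ω₁ ω₂ × (ℂ ⧸ lattice ω₁ ω₂)) :
    ℂ ⧸ lattice ω₁ ω₂ → ℂ ⧸ lattice ω₁ ω₂ :=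
  fun X => rbar ω₁ ω₂ x.1.1 x.1.2 X + x.2

/-- The crossed-product multiplication `(r, [a])·(s, [b]) = (r·s, [a + r·b])`, i.e.
`(r, A)·(s, B) = (r·s, A + r̄ B)`, on `R × (ℂ/Λ)`. -/
noncomputable def tmul0 (ω₁ ω₂ : ℂ) (x y : Rmul ω₁ ω₂ × (ℂ ⧸ lattice ω₁ ω₂)) :
    Rmul ω₁ ω₂ × (ℂ ⧸ lattice ω₁ ω₂) :=
  (⟨x.1.1 * y.1.1, mul_mem_R x.1.2 y.1.2⟩, x.2 + rbar ω₁ ω₂ x.1.1 x.1.2 y.2)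

/-!
The only non-formal point is injectivity: if `f̄_{r,a} = f̄_{s,b}` then `[a] = [b]` (evaluate at `0`)
and `(s - r)·z ∈ Λ` for every `z ∈ ℂ`. Since `Λ` is countable and `ℂ` is not, this forces `r = s`.
-/

theorem lattice_countable (ω₁ ω₂ : ℂ) : (lattice ω₁ ω₂ : Set ℂ).Countable := by
  refine (Set.countable_range fun p : ℤ × ℤ => (p.1 : ℂ) * ω₁ + p.2 * ω₂).mono ?_
  rintro z ⟨m, n, rfl⟩
  exact ⟨(m, n), rfl⟩

theorem eq_zero_of_forall_mul_mem {L : AddSubgroup ℂ} (hL : (L : Set ℂ).Countable) {d : ℂ}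
    (h : ∀ z, d * z ∈ L) : d = 0 := by
  by_contra hd
  have huniv : (Set.univ : Set ℂ) = (d * ·) ⁻¹' L := (Set.eq_univ_of_forall h).symm
  exact not_countable_complex (huniv ▸ hL.preimage (mul_right_injective₀ hd))

section Phi

variable {ω₁ ω₂ : ℂ}

theorem Phi_mk (r : Rmul ω₁ ω₂) (a z : ℂ) :
    Phi ω₁ ω₂ (r, (a : ℂ ⧸ lattice ω₁ ω₂)) (z : ℂ ⧸ lattice ω₁ ω₂) =
      ((r.1 * z + a : ℂ) : ℂ ⧸ lattice ω₁ ω₂) :=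
  rfl

theorem Phi_zero (x : Rmul ω₁ ω₂ × (ℂ ⧸ lattice ω₁ ω₂)) : Phi ω₁ ω₂ x 0 = x.2 := by
  obtain ⟨r, A⟩ := x
  induction A using QuotientAddGroup.induction_on with
  | H a => simpa using Phi_mk r a 0

theorem Phi_injective : Function.Injective (Phi ω₁ ω₂) := by
  rintro ⟨r, A⟩ ⟨s, B⟩ h
  have hAB : A = B := by simpa only [Phi_zero] using congrFun h 0
  subst hAB
  have hmul : ∀ z, (s.1 - r.1) * z ∈ lattice ω₁ ω₂ := fun z => by
    have hz : ((r.1 * z : ℂ) : ℂ ⧸ lattice ω₁ ω₂) = ((s.1 * z : ℂ) : ℂ ⧸ lattice ω₁ ω₂) :=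
      add_right_cancel (congrFun h z)
    simpa only [QuotientAddGroup.eq, neg_add_eq_sub, sub_mul] using hz
  have hrs : r = s :=
    Subtype.ext (sub_eq_zero.mp (eq_zero_of_forall_mul_mem (lattice_countable ω₁ ω₂) hmul)).symm
  rw [hrs]

theorem range_Phi :
    Set.range (Phi ω₁ ω₂) =
      {f : ℂ ⧸ lattice ω₁ ω₂ → ℂ ⧸ lattice ω₁ ω₂ |
        ∃ a b : ℂ, (∀ α ∈ lattice ω₁ ω₂, a * α ∈ lattice ω₁ ω₂) ∧
          ∀ z : ℂ, f (z : ℂ ⧸ lattice ω₁ ω₂) = ((a * z + b : ℂ) : ℂ ⧸ lattice ω₁ ω₂)} := by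
  ext f
  constructor
  · rintro ⟨⟨r, A⟩, rfl⟩
    obtain ⟨a, rfl⟩ := QuotientAddGroup.mk_surjective A
    exact ⟨r.1, a, r.2, Phi_mk r a⟩
  · rintro ⟨a, b, ha, hf⟩
    refine ⟨(⟨a, ha⟩, (b : ℂ ⧸ lattice ω₁ ω₂)), funext fun X => ?_⟩
    induction X using QuotientAddGroup.induction_on with
    | H z => exact (hf z).symm

theorem Phi_tmul0 (x y : Rmul ω₁ ω₂ × (ℂ ⧸ lattice ω₁ ω₂)) :
    Phi ω₁ ω₂ (tmul0 ω₁ ω₂ x y) = Phi ω₁ ω₂ x ∘ Phi ω₁ ω₂ y := by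
  obtain ⟨r, A⟩ := x
  obtain ⟨s, B⟩ := y
  induction A using QuotientAddGroup.induction_on with | H a => ?_
  induction B using QuotientAddGroup.induction_on with | H b => ?_
  funext X
  induction X using QuotientAddGroup.induction_on with
  | H z =>
    change ((r.1 * s.1 * z + (a + r.1 * b) : ℂ) : ℂ ⧸ lattice ω₁ ω₂) =
      ((r.1 * (s.1 * z + b) + a : ℂ) : ℂ ⧸ lattice ω₁ ω₂)
    congr 1
    ring

end Phi

theorem Phi_truss_isomorphism_general (ω₁ ω₂ : ℂ) :
    (∀ (r : Rmul ω₁ ω₂) (a z : ℂ),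
      Phi ω₁ ω₂ (r, ((a : ℂ ⧸ lattice ω₁ ω₂))) ((z : ℂ ⧸ lattice ω₁ ω₂)) =
        ((r.1 * z + a : ℂ) : ℂ ⧸ lattice ω₁ ω₂)) ∧
    Function.Injective (Phi ω₁ ω₂) ∧
    Set.range (Phi ω₁ ω₂) =
      {f : ℂ ⧸ lattice ω₁ ω₂ → ℂ ⧸ lattice ω₁ ω₂ |
        ∃ a b : ℂ, (∀ α ∈ lattice ω₁ ω₂, a * α ∈ lattice ω₁ ω₂) ∧
          ∀ z : ℂ, f ((z : ℂ ⧸ lattice ω₁ ω₂)) = ((a * z + b : ℂ) : ℂ ⧸ lattice ω₁ ω₂)} ∧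
    (∀ x y : Rmul ω₁ ω₂ × (ℂ ⧸ lattice ω₁ ω₂),
      Phi ω₁ ω₂ (tmul0 ω₁ ω₂ x y) = Phi ω₁ ω₂ x ∘ Phi ω₁ ω₂ y) :=
  ⟨Phi_mk, Phi_injective, range_Phi, Phi_tmul0⟩

/-- `Φ : R × (ℂ/Λ) → (ℂ/Λ → ℂ/Λ)`, `(r, [a]) ↦ ([z] ↦ [r·z + a])`, is well defined and
injective, its range is exactly the set of maps of the form `f̄_{a,b}` with `a·Λ ⊆ Λ`, and it
turns the crossed-product multiplication into composition: the truss of endomorphisms of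
`ℂ/Λ` is isomorphic to the crossed-product truss `R × (ℂ/Λ)`. -/
theorem Phi_truss_isomorphism (ω₁ ω₂ : ℂ) (hτ : 0 < (ω₁ / ω₂).im) :
    (∀ (r : Rmul ω₁ ω₂) (a z : ℂ),
      Phi ω₁ ω₂ (r, ((a : ℂ ⧸ lattice ω₁ ω₂))) ((z : ℂ ⧸ lattice ω₁ ω₂)) =
        ((r.1 * z + a : ℂ) : ℂ ⧸ lattice ω₁ ω₂)) ∧
    Function.Injective (Phi ω₁ ω₂) ∧
    Set.range (Phi ω₁ ω₂) =
      {f : ℂ ⧸ lattice ω₁ ω₂ → ℂ ⧸ lattice ω₁ ω₂ |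
        ∃ a b : ℂ, (∀ α ∈ lattice ω₁ ω₂, a * α ∈ lattice ω₁ ω₂) ∧
          ∀ z : ℂ, f ((z : ℂ ⧸ lattice ω₁ ω₂)) = ((a * z + b : ℂ) : ℂ ⧸ lattice ω₁ ω₂)} ∧
    (∀ x y : Rmul ω₁ ω₂ × (ℂ ⧸ lattice ω₁ ω₂),
      Phi ω₁ ω₂ (tmul0 ω₁ ω₂ x y) = Phi ω₁ ω₂ x ∘ Phi ω₁ ω₂ y) :=
  Phi_truss_isomorphism_general ω₁ ω₂
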